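/- arXiv:1811.04865 — 2 statements merged into one kernel-verified Lean document; each statement's English description precedes it below -/
import Mathlib

section
/- Let I be an interval and f, g : I → ℝ be continuous strictly monotone functions with g decreasing. Then f ≺ g (i.e. A^[f] ≤ A^[g] pointwise) if and only if g ∘ f⁻¹ is concave on f(I). -/
/-!
Put `J = f(I)` and `h = g ∘ f⁻¹`. For `xᵢ = f(vᵢ)`, applying the decreasing `g` to
`A^[f](v) ≤ A^[g](v)` turns it into Jensen's inequality `(∑ h(xᵢ))/n ≤ h((∑ xᵢ)/n)` with equal
weights, so `f ≺ g` says exactly that `h` satisfies the concavity inequality for rational weights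
(repeating points). Since `h` is monotone, a real weight `t` can be approximated by `⌊tn⌋/n` or
`⌈tn⌉/n` from the side on which the error has the right sign, and concavity follows.
-/

open Filter Set

/-- `m` is the value of the quasi-arithmetic mean `A^[f]` on the tuple `v` from `I`,
i.e. `m ∈ I` and `f m = (f v₁ + ⋯ + f vₙ)/n`. -/
def IsQAM (I : Set ℝ) (f : ℝ → ℝ) {n : ℕ} (v : Fin n → ℝ) (m : ℝ) : Prop :=
  m ∈ I ∧ f m = (∑ i, f (v i)) / n

/-- `A^[f] ≤ A^[g]` pointwise on all (nonempty) finite tuples from `I` (the relation `f ≺ g`). -/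
def QALE (I : Set ℝ) (f g : ℝ → ℝ) : Prop :=
  ∀ (n : ℕ), 0 < n → ∀ (v : Fin n → ℝ), (∀ i, v i ∈ I) →
    ∀ a b : ℝ, IsQAM I f v a → IsQAM I g v b → a ≤ b

/-- `A^[f] = A^[g]` on all (nonempty) finite tuples from `I`. -/
def QAEQ (I : Set ℝ) (f g : ℝ → ℝ) : Prop :=
  ∀ (n : ℕ), 0 < n → ∀ (v : Fin n → ℝ), (∀ i, v i ∈ I) →
    ∀ a b : ℝ, IsQAM I f v a → IsQAM I g v b → a = b

open Function

theorem StrictMonoOn.monotoneOn_invFunOn {α β : Type*} [LinearOrder α] [Preorder β] [Nonempty α]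
    {f : α → β} {s : Set α} (hf : StrictMonoOn f s) : MonotoneOn (invFunOn f s) (f '' s) :=
  fun _ hx _ hy hxy => (hf.le_iff_le (invFunOn_mem hx) (invFunOn_mem hy)).1 <| by
    rwa [invFunOn_eq hx, invFunOn_eq hy]

theorem StrictAntiOn.antitoneOn_invFunOn {α β : Type*} [LinearOrder α] [Preorder β] [Nonempty α]
    {f : α → β} {s : Set α} (hf : StrictAntiOn f s) : AntitoneOn (invFunOn f s) (f '' s) :=
  fun _ hx _ hy hxy => (hf.le_iff_ge (invFunOn_mem hx) (invFunOn_mem hy)).1 <| by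
    rwa [invFunOn_eq hx, invFunOn_eq hy]

theorem AntitoneOn.monotoneOn_or_antitoneOn_comp_invFunOn {α β γ : Type*} [LinearOrder α]
    [Preorder β] [Preorder γ] [Nonempty α] {f : α → β} {g : α → γ} {s : Set α}
    (hf : StrictMonoOn f s ∨ StrictAntiOn f s) (hg : AntitoneOn g s) :
    MonotoneOn (g ∘ invFunOn f s) (f '' s) ∨ AntitoneOn (g ∘ invFunOn f s) (f '' s) :=
  have hmaps := (surjOn_image f s).mapsTo_invFunOn
  hf.symm.imp (fun hf => hg.comp hf.antitoneOn_invFunOn hmaps)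
    (fun hf => hg.comp_MonotoneOn hf.monotoneOn_invFunOn hmaps)

theorem Set.OrdConnected.convex_image {I : Set ℝ} {f : ℝ → ℝ} (hI : I.OrdConnected)
    (hf : ContinuousOn f I) : Convex ℝ (f '' I) :=
  convex_iff_ordConnected.2 (hI.isPreconnected.image f hf).ordConnected

theorem Convex.sum_div_mem {J : Set ℝ} (hJ : Convex ℝ J) {n : ℕ} (hn : 0 < n) {x : Fin n → ℝ}
    (hx : ∀ i, x i ∈ J) : (∑ i, x i) / n ∈ J := by
  have hw : ∑ _i : Fin n, (n : ℝ)⁻¹ = 1 := by simp [hn.ne']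
  simpa [div_eq_inv_mul, Finset.mul_sum] using
    hJ.sum_mem (fun _ _ => by positivity) hw (fun i _ => hx i)

theorem Fin.sum_ite_val_lt {M : Type*} [AddCommMonoid M] {n k : ℕ} (hk : k ≤ n) (a b : M) :
    ∑ i : Fin n, (if (i : ℕ) < k then a else b) = k • a + (n - k) • b := by
  rw [Finset.sum_ite, Finset.sum_const, Finset.sum_const, Finset.filter_not,
    Finset.card_sdiff_of_subset (Finset.filter_subset _ _), Fin.card_filter_val_lt,
    min_eq_right hk, Finset.card_univ, Fintype.card_fin]

theorem le_of_forall_nat_div_le {L G : ℝ → ℝ} (hL : Continuous L)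
    (hG : MonotoneOn G (Icc 0 1) ∨ AntitoneOn G (Icc 0 1))
    (h : ∀ k n : ℕ, 0 < n → k ≤ n → L (k / n) ≤ G (k / n)) {t : ℝ} (ht : t ∈ Icc 0 1) :
    L t ≤ G t := by
  obtain ⟨ht0, ht1⟩ := ht
  have hmul : ∀ n : ℕ, t * n ≤ n := fun n => mul_le_of_le_one_left n.cast_nonneg ht1
  rcases hG with hG | hG
  · have hq := (tendsto_nat_floor_mul_div_atTop ht0).comp tendsto_natCast_atTop_atTop
    refine le_of_tendsto ((hL.tendsto t).comp hq) ?_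
    filter_upwards [eventually_gt_atTop 0] with n hn
    have hn' : (0 : ℝ) < n := by exact_mod_cast hn
    have hqt : (⌊t * n⌋₊ : ℝ) / n ≤ t := by
      rw [div_le_iff₀ hn']; exact Nat.floor_le (by positivity)
    have hk : ⌊t * n⌋₊ ≤ n := Nat.floor_le_of_le (hmul n)
    exact (h _ n hn hk).trans (hG ⟨by positivity, hqt.trans ht1⟩ ⟨ht0, ht1⟩ hqt)
  · have hq := (tendsto_nat_ceil_mul_div_atTop ht0).comp tendsto_natCast_atTop_atTop
    refine le_of_tendsto ((hL.tendsto t).comp hq) ?_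
    filter_upwards [eventually_gt_atTop 0] with n hn
    have hn' : (0 : ℝ) < n := by exact_mod_cast hn
    have hk : ⌈t * n⌉₊ ≤ n := Nat.ceil_le.2 (hmul n)
    have htq : t ≤ (⌈t * n⌉₊ : ℝ) / n := by
      rw [le_div_iff₀ hn']; exact Nat.le_ceil _
    have hq1 : (⌈t * n⌉₊ : ℝ) / n ≤ 1 := by
      rw [div_le_one hn']; exact_mod_cast hk
    exact (h _ n hn hk).trans (hG ⟨ht0, ht1⟩ ⟨ht0.trans htq, hq1⟩ htq)

/-- Jensen's inequality for equal weights; repeating points, it covers all rational weights. -/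
def ConcaveOnAverages (J : Set ℝ) (h : ℝ → ℝ) : Prop :=
  ∀ n : ℕ, 0 < n → ∀ x : Fin n → ℝ, (∀ i, x i ∈ J) → (∑ i, h (x i)) / n ≤ h ((∑ i, x i) / n)

section ConcaveOnAverages

variable {J : Set ℝ} {h : ℝ → ℝ}

theorem ConcaveOn.concaveOnAverages (hh : ConcaveOn ℝ J h) : ConcaveOnAverages J h := by
  intro n hn x hx
  have hw : ∑ _i : Fin n, (n : ℝ)⁻¹ = 1 := by simp [hn.ne']
  simpa [div_eq_inv_mul, Finset.mul_sum] using
    hh.le_map_sum (fun _ _ => by positivity) hw (fun i _ => hx i)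

theorem ConcaveOnAverages.le_map_nat_div_combo (hh : ConcaveOnAverages J h) {x y : ℝ} (hx : x ∈ J)
    (hy : y ∈ J) {k n : ℕ} (hn : 0 < n) (hk : k ≤ n) :
    k / n * h x + (1 - k / n) * h y ≤ h (k / n * x + (1 - k / n) * y) := by
  have hn' : (n : ℝ) ≠ 0 := by positivity
  have := hh n hn (fun i => if (i : ℕ) < k then x else y) fun i => by split_ifs <;> assumption
  simp only [apply_ite h, Fin.sum_ite_val_lt hk, nsmul_eq_mul, Nat.cast_sub hk] at this
  convert this using 2 <;> field_simp

theorem ConcaveOnAverages.concaveOn (hJ : Convex ℝ J) (hmono : MonotoneOn h J ∨ AntitoneOn h J)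
    (hh : ConcaveOnAverages J h) : ConcaveOn ℝ J h := by
  refine LinearOrder.concaveOn_of_lt hJ fun x hx y hy hxy a b ha hb hab => ?_
  set line : ℝ → ℝ := fun t => t * x + (1 - t) * y
  have hline : AntitoneOn line (Icc 0 1) := fun s _ t _ hst => by
    simp only [line]; nlinarith
  have hmaps : MapsTo line (Icc 0 1) J := fun t ht => by
    simpa [line] using hJ hx hy ht.1 (sub_nonneg.2 ht.2) (add_sub_cancel t 1)
  have hG : MonotoneOn (h ∘ line) (Icc 0 1) ∨ AntitoneOn (h ∘ line) (Icc 0 1) :=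
    hmono.symm.imp (fun hm => hm.comp hline hmaps) (fun hm => hm.comp_AntitoneOn hline hmaps)
  have := le_of_forall_nat_div_le (L := fun t => t * h x + (1 - t) * h y) (by fun_prop) hG
    (fun k n hn hk => hh.le_map_nat_div_combo hx hy hn hk) ⟨ha.le, by linarith⟩
  obtain rfl : b = 1 - a := by linarith
  simpa [line] using this

theorem concaveOn_iff_concaveOnAverages (hJ : Convex ℝ J)
    (hmono : MonotoneOn h J ∨ AntitoneOn h J) : ConcaveOn ℝ J h ↔ ConcaveOnAverages J h :=
  ⟨ConcaveOn.concaveOnAverages, ConcaveOnAverages.concaveOn hJ hmono⟩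

end ConcaveOnAverages

theorem exists_isQAM {I : Set ℝ} {f : ℝ → ℝ} (hI : I.OrdConnected) (hf : ContinuousOn f I)
    {n : ℕ} (hn : 0 < n) {v : Fin n → ℝ} (hv : ∀ i, v i ∈ I) : ∃ m, IsQAM I f v m := by
  obtain ⟨m, hm, hfm⟩ := (hI.convex_image hf).sum_div_mem hn fun i => mem_image_of_mem f (hv i)
  exact ⟨m, hm, hfm⟩

theorem qale_iff_concaveOnAverages {I : Set ℝ} {f g : ℝ → ℝ} (hI : I.OrdConnected)
    (hfc : ContinuousOn f I) (hgc : ContinuousOn g I) (hf : InjOn f I) (hg : StrictAntiOn g I) :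
    QALE I f g ↔ ConcaveOnAverages (f '' I) (g ∘ invFunOn f I) := by
  constructor
  · intro hQ n hn x hx
    set v : Fin n → ℝ := fun i => invFunOn f I (x i)
    have hv : ∀ i, v i ∈ I := fun i => invFunOn_mem (hx i)
    have hfv : ∀ i, f (v i) = x i := fun i => invFunOn_eq (hx i)
    have havg := (hI.convex_image hfc).sum_div_mem hn hx
    have ha : IsQAM I f v (invFunOn f I ((∑ i, x i) / n)) := by
      refine ⟨invFunOn_mem havg, ?_⟩
      simp only [hfv, invFunOn_eq havg]
    obtain ⟨b, hb⟩ := exists_isQAM hI hgc hn hv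
    have hgba := hg.antitoneOn ha.1 hb.1 (hQ n hn v hv _ b ha hb)
    exact hb.2 ▸ hgba
  · intro hJ n hn v hv a b ha hb
    by_contra! hba
    have hfg : ∀ u ∈ I, g (invFunOn f I (f u)) = g u := fun u hu => by
      rw [hf.leftInvOn_invFunOn hu]
    have := hJ n hn (f ∘ v) fun i => mem_image_of_mem f (hv i)
    simp only [comp_apply, hfg _ (hv _)] at this
    rw [← ha.2, hfg a ha.1, ← hb.2] at this
    exact (hg hb.1 ha.1 hba).not_ge this

/-- for continuous strictly monotone `f, g` on an interval `I` with `g`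
decreasing, `f ≺ g` iff `g ∘ f⁻¹` is concave on `f(I)`. -/
theorem qale_iff_concaveOn_comp_invFunOn
    (I : Set ℝ) (hI : I.OrdConnected)
    (f g : ℝ → ℝ)
    (hfc : ContinuousOn f I) (hgc : ContinuousOn g I)
    (hf : StrictMonoOn f I ∨ StrictAntiOn f I)
    (hg : StrictAntiOn g I) :
    QALE I f g ↔ ConcaveOn ℝ (f '' I) (g ∘ Function.invFunOn f I) := by
  rw [qale_iff_concaveOnAverages hI hfc hgc (hf.elim StrictMonoOn.injOn StrictAntiOn.injOn) hg,
    concaveOn_iff_concaveOnAverages (hI.convex_image hfc)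
      (hg.antitoneOn.monotoneOn_or_antitoneOn_comp_invFunOn hf)]
end

section
/- Let I be an interval and f, g : I → ℝ be C² strictly monotone functions with nowhere vanishing first derivatives, and let h : I → ℝ be a C² function with h′ nowhere vanishing satisfying h″/h′ = max(f″/f′, g″/g′) pointwise. Then for every continuous strictly monotone s : I → ℝ with A^[f] ≤ A^[s] and A^[g] ≤ A^[s] pointwise, one has A^[h] ≤ A^[s] pointwise. That is, h generates the least upper bound of A^[f] and A^[g] among all quasi-arithmetic means. -/
open Filter Set

open Function Topology

lemma isQAM_neg {I : Set ℝ} {f : ℝ → ℝ} {n : ℕ} {v : Fin n → ℝ} {m : ℝ} :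
    IsQAM I (fun x => -f x) v m ↔ IsQAM I f v m := by
  simp only [IsQAM, Finset.sum_neg_distrib, neg_div, neg_inj]

lemma qale_neg_left {I : Set ℝ} {f s : ℝ → ℝ} :
    QALE I (fun x => -f x) s ↔ QALE I f s := by
  unfold QALE; simp only [isQAM_neg]

lemma qale_neg_right {I : Set ℝ} {f s : ℝ → ℝ} :
    QALE I f (fun x => -s x) ↔ QALE I f s := by
  unfold QALE; simp only [isQAM_neg]

lemma exists_qam {I : Set ℝ} (hI : I.OrdConnected) {F : ℝ → ℝ} (hc : ContinuousOn F I)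
    {n : ℕ} (hn : 0 < n) (v : Fin n → ℝ) (hv : ∀ i, v i ∈ I) :
    ∃ m, IsQAM I F v m := by
  have hne : (Finset.univ : Finset (Fin n)).Nonempty := ⟨⟨0, hn⟩, Finset.mem_univ _⟩
  obtain ⟨i, -, hi⟩ := Finset.exists_min_image Finset.univ (fun i => F (v i)) hne
  obtain ⟨j, -, hj⟩ := Finset.exists_max_image Finset.univ (fun i => F (v i)) hne
  have hnR : (0:ℝ) < n := by exact_mod_cast hn
  have h1 : F (v i) ≤ (∑ k, F (v k)) / n := by
    rw [le_div_iff₀ hnR]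
    calc F (v i) * n = ∑ _k : Fin n, F (v i) := by
          simp [Finset.sum_const, mul_comm]
      _ ≤ ∑ k, F (v k) := Finset.sum_le_sum fun k _ => hi k (Finset.mem_univ k)
  have h2 : (∑ k, F (v k)) / n ≤ F (v j) := by
    rw [div_le_iff₀ hnR]
    calc ∑ k, F (v k) ≤ ∑ _k : Fin n, F (v j) :=
          Finset.sum_le_sum fun k _ => hj k (Finset.mem_univ k)
      _ = F (v j) * n := by simp [Finset.sum_const, mul_comm]
  have hsub : uIcc (v i) (v j) ⊆ I := hI.uIcc_subset (hv i) (hv j)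
  have hmem : (∑ k, F (v k)) / n ∈ uIcc (F (v i)) (F (v j)) := by
    rcases le_total (F (v i)) (F (v j)) with hle | hle
    · rw [uIcc_of_le hle]; exact ⟨h1, h2⟩
    · rw [uIcc_of_ge hle]; exact ⟨hle.trans h1, h2.trans hle⟩
  obtain ⟨m, hm, hFm⟩ := intermediate_value_uIcc (hc.mono hsub) hmem
  exact ⟨m, hsub hm, hFm⟩

lemma sum_ite_const {n k : ℕ} (hk : k ≤ n) (A B : ℝ) :
    ∑ i : Fin n, (if (i : ℕ) < k then A else B) = k * A + ((n : ℝ) - k) * B := by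
  rw [Fin.sum_univ_eq_sum_range (fun i => if i < k then A else B) n]
  rw [Finset.range_eq_Ico, ← Finset.sum_Ico_consecutive _ (Nat.zero_le k) hk]
  have h1 : ∑ i ∈ Finset.Ico 0 k, (if i < k then A else B) = k * A := by
    rw [Finset.sum_congr rfl (fun i hi => if_pos (Finset.mem_Ico.1 hi).2)]
    simp [mul_comm]
  have h2 : ∑ i ∈ Finset.Ico k n, (if i < k then A else B) = ((n : ℝ) - k) * B := by
    rw [Finset.sum_congr rfl (fun i hi => if_neg (not_lt.2 (Finset.mem_Ico.1 hi).1))]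
    rw [Finset.sum_const, Nat.card_Ico, nsmul_eq_mul, Nat.cast_sub hk]
  rw [h1, h2]

lemma conv3_of_qale {I : Set ℝ} (hI : I.OrdConnected) {F s : ℝ → ℝ}
    (hFc : ContinuousOn F I) (hF : StrictMonoOn F I)
    (hsc : ContinuousOn s I) (hs : StrictMonoOn s I)
    (H : QALE I F s) :
    ∀ x₁ ∈ I, ∀ x₂ ∈ I, ∀ x₃ ∈ I, x₁ < x₂ → x₂ < x₃ →
      (F x₃ - F x₁) * s x₂ ≤ (F x₃ - F x₂) * s x₁ + (F x₂ - F x₁) * s x₃ := by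
  intro x₁ h₁ x₂ h₂ x₃ h₃ h12 h23
  have hF12 : F x₁ < F x₂ := hF h₁ h₂ h12
  have hF23 : F x₂ < F x₃ := hF h₂ h₃ h23
  have hF13 : F x₁ < F x₃ := hF12.trans hF23
  have hD : (0:ℝ) < F x₃ - F x₁ := by linarith
  set lam : ℝ := (F x₃ - F x₂) / (F x₃ - F x₁) with hlam
  have hlam0 : 0 ≤ lam := le_of_lt (div_pos (by linarith) hD)
  have hlam1 : lam ≤ 1 := by
    rw [hlam, div_le_one hD]; linarith
  -- the key inequality via rational approximation
  have key : s x₂ ≤ lam * s x₁ + (1 - lam) * s x₃ := by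
    set k : ℕ → ℕ := fun n => ⌊lam * (n + 1)⌋₊ with hkdef
    set lamn : ℕ → ℝ := fun n => (k n : ℝ) / (n + 1) with hlamn
    have hkle : ∀ n : ℕ, k n ≤ n + 1 := by
      intro n
      have : (⌊lam * ((n:ℝ) + 1)⌋₊ : ℝ) ≤ ((n:ℝ) + 1) := by
        calc (⌊lam * ((n:ℝ) + 1)⌋₊ : ℝ) ≤ lam * ((n:ℝ) + 1) :=
              Nat.floor_le (by positivity)
          _ ≤ 1 * ((n:ℝ) + 1) := by
              apply mul_le_mul_of_nonneg_right hlam1 (by positivity)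
          _ = ((n:ℝ) + 1) := by ring
      have h2 : ((k n : ℕ) : ℝ) ≤ ((n + 1 : ℕ) : ℝ) := by push_cast; exact this
      exact_mod_cast h2
    have hlamn01 : ∀ n, 0 ≤ lamn n ∧ lamn n ≤ 1 := by
      intro n
      constructor
      · positivity
      · rw [div_le_one (by positivity)]
        exact_mod_cast hkle n
    have hlamtend : Tendsto lamn atTop (𝓝 lam) := by
      have hnat : Tendsto (fun n : ℕ => ((n : ℝ) + 1)) atTop atTop :=
        tendsto_atTop_add_const_right atTop 1 tendsto_natCast_atTop_atTop
      have h0 := (tendsto_nat_floor_mul_div_atTop (R := ℝ) hlam0).comp hnat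
      exact h0
    -- tuples
    set v : ∀ n : ℕ, Fin (n + 1) → ℝ := fun n i => if (i : ℕ) < k n then x₁ else x₃ with hvdef
    have hvmem : ∀ n i, v n i ∈ I := by
      intro n i; by_cases hc : (i : ℕ) < k n <;> simp [hvdef, hc, h₁, h₃]
    have hFsum : ∀ n, (∑ i, F (v n i)) / ((n:ℝ) + 1)
        = lamn n * F x₁ + (1 - lamn n) * F x₃ := by
      intro n
      have : ∑ i, F (v n i) = (k n : ℝ) * F x₁ + (((n:ℝ) + 1) - k n) * F x₃ := by
        have hsic := sum_ite_const (n := n + 1) (k := k n) (hkle n) (F x₁) (F x₃)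
        push_cast at hsic
        rw [← hsic]
        apply Finset.sum_congr rfl
        intro i _
        by_cases hc : (i : ℕ) < k n <;> simp [hvdef, hc]
      rw [this]
      simp only [hlamn]
      field_simp
      try ring
    have hssum : ∀ n, (∑ i, s (v n i)) / ((n:ℝ) + 1)
        = lamn n * s x₁ + (1 - lamn n) * s x₃ := by
      intro n
      have : ∑ i, s (v n i) = (k n : ℝ) * s x₁ + (((n:ℝ) + 1) - k n) * s x₃ := by
        have hsic := sum_ite_const (n := n + 1) (k := k n) (hkle n) (s x₁) (s x₃)
        push_cast at hsic
        rw [← hsic]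
        apply Finset.sum_congr rfl
        intro i _
        by_cases hc : (i : ℕ) < k n <;> simp [hvdef, hc]
      rw [this]
      simp only [hlamn]
      field_simp
      try ring
    -- the means
    have hex : ∀ n : ℕ, ∃ m, IsQAM I F (v n) m :=
      fun n => exists_qam hI hFc (Nat.succ_pos n) (v n) (hvmem n)
    have hexs : ∀ n : ℕ, ∃ b, IsQAM I s (v n) b :=
      fun n => exists_qam hI hsc (Nat.succ_pos n) (v n) (hvmem n)
    choose m hm using hex
    choose b hb using hexs
    have hmle : ∀ n, s (m n) ≤ lamn n * s x₁ + (1 - lamn n) * s x₃ := by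
      intro n
      have h1 := H (n + 1) (Nat.succ_pos n) (v n) (hvmem n) (m n) (b n) (hm n) (hb n)
      have h2 : s (m n) ≤ s (b n) :=
        (hs.monotoneOn) (hm n).1 (hb n).1 h1
      calc s (m n) ≤ s (b n) := h2
        _ = (∑ i, s (v n i)) / ((n:ℝ) + 1) := by
            have := (hb n).2; rw [this]; norm_num
        _ = lamn n * s x₁ + (1 - lamn n) * s x₃ := hssum n
    -- F values of the means
    have hFm : ∀ n, F (m n) = lamn n * F x₁ + (1 - lamn n) * F x₃ := by
      intro n
      have := (hm n).2
      rw [this, ← hFsum n]; norm_num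
    -- bounds on m n
    have hmlb : ∀ n, x₁ ≤ m n := by
      intro n
      by_contra hcon
      push_neg at hcon
      have : F (m n) < F x₁ := hF (hm n).1 h₁ hcon
      have hge : F x₁ ≤ F (m n) := by
        rw [hFm n]
        have h01 := hlamn01 n
        nlinarith [hF13]
      linarith
    have hmub : ∀ n, m n ≤ x₃ := by
      intro n
      by_contra hcon
      push_neg at hcon
      have : F x₃ < F (m n) := hF h₃ (hm n).1 hcon
      have hle : F (m n) ≤ F x₃ := by
        rw [hFm n]
        have h01 := hlamn01 n
        nlinarith [hF13]
      linarith
    -- F (m n) tends to F x₂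
    have hFmt : Tendsto (fun n => F (m n)) atTop (𝓝 (F x₂)) := by
      have hlim : Tendsto (fun n => lamn n * F x₁ + (1 - lamn n) * F x₃) atTop
          (𝓝 (lam * F x₁ + (1 - lam) * F x₃)) := by
        exact ((hlamtend.mul tendsto_const_nhds).add
          ((tendsto_const_nhds.sub hlamtend).mul tendsto_const_nhds))
      have heq : lam * F x₁ + (1 - lam) * F x₃ = F x₂ := by
        rw [hlam]
        field_simp
        ring
      rw [← heq]
      exact hlim.congr (fun n => (hFm n).symm)
    -- m n tends to x₂
    have hmt : Tendsto m atTop (𝓝 x₂) := by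
      rw [tendsto_order]
      constructor
      · intro c hc
        rcases lt_or_ge c x₁ with hcx | hcx
        · exact Eventually.of_forall fun n => lt_of_lt_of_le hcx (hmlb n)
        · have hcI : c ∈ I := hI.out h₁ h₂ ⟨hcx, hc.le⟩
          have hFc2 : F c < F x₂ := hF hcI h₂ hc
          have : ∀ᶠ n in atTop, F c < F (m n) :=
            hFmt.eventually (eventually_gt_nhds hFc2)
          filter_upwards [this] with n hn
          by_contra hcon
          push_neg at hcon
          exact absurd (hF.monotoneOn (hm n).1 hcI hcon) (not_le.2 hn)
      · intro c hc
        rcases lt_or_ge x₃ c with hcx | hcx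
        · exact Eventually.of_forall fun n => lt_of_le_of_lt (hmub n) hcx
        · have hcI : c ∈ I := hI.out h₂ h₃ ⟨hc.le, hcx⟩
          have hFc2 : F x₂ < F c := hF h₂ hcI hc
          have : ∀ᶠ n in atTop, F (m n) < F c :=
            hFmt.eventually (eventually_lt_nhds hFc2)
          filter_upwards [this] with n hn
          by_contra hcon
          push_neg at hcon
          exact absurd (hF.monotoneOn hcI (hm n).1 hcon) (not_le.2 hn)
    -- s (m n) tends to s x₂
    have hsmt : Tendsto (fun n => s (m n)) atTop (𝓝 (s x₂)) := by
      have hmem : ∀ᶠ n in atTop, m n ∈ I := Eventually.of_forall fun n => (hm n).1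
      have : Tendsto m atTop (𝓝[I] x₂) :=
        tendsto_nhdsWithin_iff.2 ⟨hmt, hmem⟩
      exact (hsc x₂ h₂).tendsto.comp this
    have hrhst : Tendsto (fun n => lamn n * s x₁ + (1 - lamn n) * s x₃) atTop
        (𝓝 (lam * s x₁ + (1 - lam) * s x₃)) :=
      ((hlamtend.mul tendsto_const_nhds).add
        ((tendsto_const_nhds.sub hlamtend).mul tendsto_const_nhds))
    exact le_of_tendsto_of_tendsto' hsmt hrhst hmle
  -- convert key to chord form
  have hrw : lam * (F x₃ - F x₁) = F x₃ - F x₂ := by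
    rw [hlam]
    field_simp
  have hmul := mul_le_mul_of_nonneg_left key hD.le
  have he : (F x₃ - F x₁) * (lam * s x₁ + (1 - lam) * s x₃)
      = (F x₃ - F x₂) * s x₁ + (F x₂ - F x₁) * s x₃ := by
    linear_combination (s x₁ - s x₃) * hrw
  linarith [hmul, he]

set_option maxHeartbeats 2000000 in
lemma no_max {I : Set ℝ} (hI : I.OrdConnected)
    (F h s : ℝ → ℝ)
    (hFd : ∀ x ∈ I, DifferentiableAt ℝ F x) (hFd2 : ∀ x ∈ I, DifferentiableAt ℝ (deriv F) x)
    (hF0 : ∀ x ∈ I, deriv F x ≠ 0) (hF : StrictMonoOn F I)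
    (hhd : ∀ x ∈ I, DifferentiableAt ℝ h x) (hhd2 : ∀ x ∈ I, DifferentiableAt ℝ (deriv h) x)
    (hh0 : ∀ x ∈ I, deriv h x ≠ 0) (hh : StrictMonoOn h I)
    (hs : StrictMonoOn s I)
    (conv3F : ∀ x₁ ∈ I, ∀ x₂ ∈ I, ∀ x₃ ∈ I, x₁ < x₂ → x₂ < x₃ →
      (F x₃ - F x₁) * s x₂ ≤ (F x₃ - F x₂) * s x₁ + (F x₂ - F x₁) * s x₃)
    {u v t' : ℝ} (hu : u ∈ h '' I) (hv : v ∈ h '' I) (huv : u < v) (ht' : t' ∈ Ioo u v)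
    {c' ε : ℝ} (hε : 0 < ε)
    (heq : deriv (deriv F) (invFunOn h I t') * deriv h (invFunOn h I t')
         = deriv F (invFunOn h I t') * deriv (deriv h) (invFunOn h I t'))
    (hmaxpt : ∀ t ∈ Icc u v, s (invFunOn h I t) - s (invFunOn h I t')
        ≤ c' * (t - t') - ε * (t - t')^2) :
    False := by
  classical
  set T := h '' I with hT
  set hinv := invFunOn h I with hinvdef
  have hhc : ContinuousOn h I := fun x hx => (hhd x hx).continuousAt.continuousWithinAt
  have hToc : T.OrdConnected := by
    rw [← isPreconnected_iff_ordConnected]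
    exact (isPreconnected_iff_ordConnected.2 hI).image h hhc
  have hmemI : ∀ t ∈ T, hinv t ∈ I := by
    intro t ht; obtain ⟨x, hx, rfl⟩ := ht; exact invFunOn_mem ⟨x, hx, rfl⟩
  have hright : ∀ t ∈ T, h (hinv t) = t := by
    intro t ht; obtain ⟨x, hx, rfl⟩ := ht; exact invFunOn_eq ⟨x, hx, rfl⟩
  have hleft : ∀ x ∈ I, hinv (h x) = x := fun x hx => (hh.injOn).leftInvOn_invFunOn hx
  have hinvmono : StrictMonoOn hinv T := by
    intro t1 h1 t2 h2 h12
    by_contra hcon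
    push_neg at hcon
    have := hh.monotoneOn (hmemI t2 h2) (hmemI t1 h1) hcon
    rw [hright t1 h1, hright t2 h2] at this
    exact absurd this (not_le.2 h12)
  have hIccT : Icc u v ⊆ T := hToc.out hu hv
  set xu := hinv u with hxu
  set xv := hinv v with hxv
  have hxuI : xu ∈ I := hmemI u hu
  have hxvI : xv ∈ I := hmemI v hv
  have hxuv : xu < xv := hinvmono hu hv huv
  have hIccI : Icc xu xv ⊆ I := hI.out hxuI hxvI
  -- membership conversions
  have hmem2 : ∀ x ∈ Icc xu xv, h x ∈ Icc u v := by
    intro x hx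
    have hxI : x ∈ I := hIccI hx
    constructor
    · calc u = h xu := (hright u hu).symm
        _ ≤ h x := hh.monotoneOn hxuI hxI hx.1
    · calc h x ≤ h xv := hh.monotoneOn hxI hxvI hx.2
        _ = v := hright v hv
  have hmem3 : ∀ t ∈ Icc u v, hinv t ∈ Icc xu xv :=
    fun t ht => ⟨hinvmono.monotoneOn hu (hIccT ht) ht.1, hinvmono.monotoneOn (hIccT ht) hv ht.2⟩
  -- continuity of hinv on Icc u v
  have hcontIcc : ContinuousOn hinv (Icc u v) := by
    intro t ht
    have htT : t ∈ T := hIccT ht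
    have hR : t < v → ContinuousWithinAt hinv (Ici t) t := by
      intro htv
      have hIccmem : Icc t v ∈ 𝓝[≥] t := Icc_mem_nhdsGE_of_mem ⟨le_refl t, htv⟩
      refine StrictMonoOn.continuousWithinAt_right_of_exists_between
        (hinvmono.mono (hToc.out htT hv)) hIccmem ?_
      intro b hb
      set d := min b xv with hd
      have hxd : hinv t < d := lt_min hb (hinvmono htT hv htv)
      have hdI : d ∈ I := hI.out (hmemI t htT) hxvI ⟨hxd.le, min_le_right b xv⟩
      refine ⟨h d, ⟨?_, ?_⟩, ?_⟩
      · have := hh (hmemI t htT) hdI hxd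
        rw [hright t htT] at this
        exact this.le
      · have := hh.monotoneOn hdI hxvI (min_le_right b xv)
        rw [hright v hv] at this
        exact this
      · rw [hleft d hdI]
        exact ⟨hxd, min_le_left b xv⟩
    have hL : u < t → ContinuousWithinAt hinv (Iic t) t := by
      intro hut
      have hIccmem : Icc u t ∈ 𝓝[≤] t := Icc_mem_nhdsLE_of_mem ⟨hut, le_refl t⟩
      refine StrictMonoOn.continuousWithinAt_left_of_exists_between
        (hinvmono.mono (hToc.out hu htT)) hIccmem ?_
      intro b hb
      set d := max b xu with hd
      have hxd : d < hinv t := max_lt hb (hinvmono hu htT hut)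
      have hdI : d ∈ I := hI.out hxuI (hmemI t htT) ⟨le_max_right b xu, hxd.le⟩
      refine ⟨h d, ⟨?_, ?_⟩, ?_⟩
      · have := hh.monotoneOn hxuI hdI (le_max_right b xu)
        rw [hright u hu] at this
        exact this
      · have := hh hdI (hmemI t htT) hxd
        rw [hright t htT] at this
        exact this.le
      · rw [hleft d hdI]
        exact ⟨le_max_left b xu, hxd⟩
    rcases eq_or_lt_of_le ht.2 with hv2 | hv2
    · subst hv2
      have hut : u < t := huv
      exact (hL hut).mono Icc_subset_Iic_self
    · rcases eq_or_lt_of_le ht.1 with hu2 | hu2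
      · exact (hR hv2).mono (hu2 ▸ Icc_subset_Ici_self)
      · exact ((hL hu2).union (hR hv2)).mono (fun y hy => le_total y t)
  have hderiv : ∀ t ∈ Ioo u v, HasDerivAt hinv (deriv h (hinv t))⁻¹ t := by
    intro t ht
    have htT : t ∈ T := hIccT (Ioo_subset_Icc_self ht)
    have hxI : hinv t ∈ I := hmemI t htT
    have hcontAt : ContinuousAt hinv t :=
      (hcontIcc t (Ioo_subset_Icc_self ht)).continuousAt (Icc_mem_nhds ht.1 ht.2)
    have hfg : ∀ᶠ y in 𝓝 t, h (hinv y) = y := by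
      filter_upwards [Ioo_mem_nhds ht.1 ht.2] with y hy
      exact hright y (hIccT (Ioo_subset_Icc_self hy))
    exact HasDerivAt.of_local_left_inverse hcontAt ((hhd _ hxI).hasDerivAt) (hh0 _ hxI) hfg
  -- preliminaries
  set x' := hinv t' with hx'def
  have ht'T : t' ∈ T := hIccT (Ioo_subset_Icc_self ht')
  have hx'I : x' ∈ I := hmemI t' ht'T
  have hx'l : xu < x' := hinvmono hu ht'T ht'.1
  have hx'r : x' < xv := hinvmono ht'T hv ht'.2
  have hht' : h x' = t' := hright t' ht'T
  have hF'ne : deriv F x' ≠ 0 := hF0 x' hx'I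
  have hh'ne : deriv h x' ≠ 0 := hh0 x' hx'I
  set a := c' * deriv h x' / deriv F x' with hadef
  have hIooIl : ∀ y ∈ Ioo xu x', y ∈ I := fun y hy => hIccI ⟨hy.1.le, (hy.2.trans hx'r).le⟩
  have hIooIr : ∀ y ∈ Ioo x' xv, y ∈ I := fun y hy => hIccI ⟨(hx'l.trans hy.1).le, hy.2.le⟩
  -- the three-point slope inequality
  have slope3 : ∀ y ∈ I, ∀ x ∈ I, y < x' → x' < x →
      (s x' - s y) * (F x - F x') ≤ (s x - s x') * (F x' - F y) := by
    intro y hy x hx hyx hxx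
    have hc := conv3F y hy x' hx'I x hx hyx hxx
    ring_nf at hc ⊢
    linarith
  -- rewriting of hmaxpt in x-coordinates
  have hmaxpt' : ∀ y ∈ Icc xu xv, s y - s x' ≤ c' * (h y - t') - ε * (h y - t')^2 := by
    intro y hy
    have h1 := hmaxpt (h y) (hmem2 y hy)
    rwa [hleft y (hIccI hy)] at h1
  -- Claim right
  have claimR : ∀ x ∈ I, x' < x → x ≤ xv → a * (F x - F x') ≤ s x - s x' := by
    intro x hxI hgt hle
    have hFx : (0:ℝ) < F x - F x' := sub_pos.2 (hF hx'I hxI hgt)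
    rw [← le_div_iff₀ hFx]
    set q : ℝ → ℝ := fun y => (c' * (h x' - h y) + ε * (h x' - h y)^2) / (F x' - F y) with hqdef
    have hLrw : 𝓝[Ioo xu x'] x' = 𝓝[<] x' := nhdsWithin_Ioo_eq_nhdsLT hx'l
    have htq : Tendsto q (𝓝[<] x') (𝓝 a) := by
      rw [← hLrw]
      have hslh : Tendsto (slope h x') (𝓝[Ioo xu x'] x') (𝓝 (deriv h x')) :=
        (hasDerivAt_iff_tendsto_slope.1 (hhd x' hx'I).hasDerivAt).mono_left
          (nhdsWithin_mono x' (fun y hy => ne_of_lt hy.2))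
      have hslF : Tendsto (slope F x') (𝓝[Ioo xu x'] x') (𝓝 (deriv F x')) :=
        (hasDerivAt_iff_tendsto_slope.1 (hFd x' hx'I).hasDerivAt).mono_left
          (nhdsWithin_mono x' (fun y hy => ne_of_lt hy.2))
      have hco : Tendsto (fun y => h x' - h y) (𝓝[Ioo xu x'] x') (𝓝 0) := by
        have hch : Tendsto h (𝓝[Ioo xu x'] x') (𝓝 (h x')) :=
          ((hhc x' hx'I).mono hIooIl).tendsto
        have h2 : Tendsto (fun y => h x' - h y) (𝓝[Ioo xu x'] x') (𝓝 (h x' - h x')) :=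
          tendsto_const_nhds.sub hch
        simpa using h2
      have hprod : Tendsto (fun y => (c' + ε * (h x' - h y)) * (slope h x' y / slope F x' y))
          (𝓝[Ioo xu x'] x') (𝓝 ((c' + ε * 0) * (deriv h x' / deriv F x'))) :=
        (tendsto_const_nhds.add (tendsto_const_nhds.mul hco)).mul (hslh.div hslF hF'ne)
      have heval : (c' + ε * 0) * (deriv h x' / deriv F x') = a := by
        rw [hadef]; ring
      rw [heval] at hprod
      refine hprod.congr' ?_
      filter_upwards [self_mem_nhdsWithin] with y hy
      have hyI : y ∈ I := hIooIl y hy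
      have hyne : y - x' ≠ 0 := sub_ne_zero.2 (ne_of_lt hy.2)
      have hFne : F y - F x' ≠ 0 := sub_ne_zero.2 (ne_of_lt (hF hyI hx'I hy.2))
      rw [hqdef]
      have hFne' : F x' - F y ≠ 0 := sub_ne_zero.2 (ne_of_gt (hF hyI hx'I hy.2))
      simp only [slope_def_field]
      rw [div_div_div_cancel_right₀]
      · field_simp
        ring
      · exact hyne
    refine le_of_tendsto htq ?_
    rw [← hLrw]
    filter_upwards [self_mem_nhdsWithin] with y hy
    have hyI : y ∈ I := hIooIl y hy
    have hFyx : (0:ℝ) < F x' - F y := sub_pos.2 (hF hyI hx'I hy.2)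
    have hstep1 : c' * (h x' - h y) + ε * (h x' - h y)^2 ≤ s x' - s y := by
      have h1 := hmaxpt' y ⟨hy.1.le, hy.2.le.trans hx'r.le⟩
      have hrw : h y - t' = -(h x' - h y) := by rw [← hht']; ring
      rw [hrw] at h1
      nlinarith [h1]
    have hstep2 : q y ≤ (s x' - s y) / (F x' - F y) := by
      rw [hqdef]
      exact (div_le_div_iff_of_pos_right hFyx).mpr hstep1
    have hstep3 : (s x' - s y) / (F x' - F y) ≤ (s x - s x') / (F x - F x') := by
      rw [div_le_div_iff₀ hFyx hFx]
      exact slope3 y hyI x hxI hy.2 hgt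
    exact hstep2.trans hstep3
  -- Claim left
  have claimL : ∀ x ∈ I, xu ≤ x → x < x' → a * (F x - F x') ≤ s x - s x' := by
    intro x hxI hge hlt
    have hFx : (0:ℝ) < F x' - F x := sub_pos.2 (hF hxI hx'I hlt)
    have hgoal : (s x' - s x) / (F x' - F x) ≤ a → a * (F x - F x') ≤ s x - s x' := by
      intro hd
      rw [div_le_iff₀ hFx] at hd
      nlinarith [hd]
    apply hgoal
    set r : ℝ → ℝ := fun z => (c' * (h z - h x') - ε * (h z - h x')^2) / (F z - F x') with hrdef
    have hLrw : 𝓝[Ioo x' xv] x' = 𝓝[>] x' := nhdsWithin_Ioo_eq_nhdsGT hx'r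
    have htr : Tendsto r (𝓝[>] x') (𝓝 a) := by
      rw [← hLrw]
      have hslh : Tendsto (slope h x') (𝓝[Ioo x' xv] x') (𝓝 (deriv h x')) :=
        (hasDerivAt_iff_tendsto_slope.1 (hhd x' hx'I).hasDerivAt).mono_left
          (nhdsWithin_mono x' (fun z hz => ne_of_gt hz.1))
      have hslF : Tendsto (slope F x') (𝓝[Ioo x' xv] x') (𝓝 (deriv F x')) :=
        (hasDerivAt_iff_tendsto_slope.1 (hFd x' hx'I).hasDerivAt).mono_left
          (nhdsWithin_mono x' (fun z hz => ne_of_gt hz.1))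
      have hco : Tendsto (fun z => h z - h x') (𝓝[Ioo x' xv] x') (𝓝 0) := by
        have hch : Tendsto h (𝓝[Ioo x' xv] x') (𝓝 (h x')) :=
          ((hhc x' hx'I).mono hIooIr).tendsto
        have h2 : Tendsto (fun z => h z - h x') (𝓝[Ioo x' xv] x') (𝓝 (h x' - h x')) :=
          hch.sub tendsto_const_nhds
        simpa using h2
      have hprod : Tendsto (fun z => (c' - ε * (h z - h x')) * (slope h x' z / slope F x' z))
          (𝓝[Ioo x' xv] x') (𝓝 ((c' - ε * 0) * (deriv h x' / deriv F x'))) :=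
        (tendsto_const_nhds.sub (tendsto_const_nhds.mul hco)).mul (hslh.div hslF hF'ne)
      have heval : (c' - ε * 0) * (deriv h x' / deriv F x') = a := by
        rw [hadef]; ring
      rw [heval] at hprod
      refine hprod.congr' ?_
      filter_upwards [self_mem_nhdsWithin] with z hz
      have hzI : z ∈ I := hIooIr z hz
      have hzne : z - x' ≠ 0 := sub_ne_zero.2 (ne_of_gt hz.1)
      have hFne : F z - F x' ≠ 0 := sub_ne_zero.2 (ne_of_gt (hF hx'I hzI hz.1))
      rw [hrdef]
      simp only [slope_def_field]
      rw [div_div_div_cancel_right₀]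
      · field_simp
      · exact hzne
    refine ge_of_tendsto htr ?_
    rw [← hLrw]
    filter_upwards [self_mem_nhdsWithin] with z hz
    have hzI : z ∈ I := hIooIr z hz
    have hFzx : (0:ℝ) < F z - F x' := sub_pos.2 (hF hx'I hzI hz.1)
    have hstep1 : s z - s x' ≤ c' * (h z - h x') - ε * (h z - h x')^2 := by
      have h1 := hmaxpt' z ⟨(hx'l.trans hz.1).le, hz.2.le⟩
      rwa [← hht'] at h1
    have hstep2 : (s z - s x') / (F z - F x') ≤ r z := by
      rw [hrdef]
      exact (div_le_div_iff_of_pos_right hFzx).mpr hstep1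
    have hstep3 : (s x' - s x) / (F x' - F x) ≤ (s z - s x') / (F z - F x') := by
      rw [div_le_div_iff₀ hFx hFzx]
      have := slope3 x hxI z hzI hlt hz.1
      nlinarith [this]
    exact hstep3.trans hstep2
  -- combined subgradient inequality
  have claimA : ∀ t ∈ Icc u v, a * (F (hinv t) - F x') ≤ s (hinv t) - s x' := by
    intro t ht
    have hx := hmem3 t ht
    rcases lt_trichotomy (hinv t) x' with hc | hc | hc
    · exact claimL (hinv t) (hIccI hx) hx.1 hc
    · rw [hc]; simp
    · exact claimR (hinv t) (hIccI hx) hc hx.2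
  -- derivative of θ := F ∘ hinv and its derivative function Dθ
  set θ : ℝ → ℝ := fun t => F (hinv t) with hθdef
  set Dθ : ℝ → ℝ := fun t => deriv F (hinv t) * (deriv h (hinv t))⁻¹ with hDθdef
  have hθd : ∀ t ∈ Ioo u v, HasDerivAt θ (Dθ t) t := by
    intro t ht
    have hxI : hinv t ∈ I := hmemI t (hIccT (Ioo_subset_Icc_self ht))
    exact (hFd _ hxI).hasDerivAt.comp t (hderiv t ht)
  have hDθd : HasDerivAt Dθ 0 t' := by
    have h1 : HasDerivAt (deriv F) (deriv (deriv F) x') x' := (hFd2 _ hx'I).hasDerivAt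
    have h2 : HasDerivAt (fun x => (deriv h x)⁻¹)
        (-(deriv (deriv h) x') / (deriv h x')^2) x' := (hhd2 _ hx'I).hasDerivAt.inv hh'ne
    have h3 := h1.mul h2
    have hval : deriv (deriv F) x' * (deriv h x')⁻¹ +
        deriv F x' * (-(deriv (deriv h) x') / (deriv h x')^2) = 0 := by
      field_simp
      linear_combination heq
    rw [hval] at h3
    have h4 := h3.comp t' (hderiv t' ht')
    simp only [zero_mul] at h4
    exact h4
  have hDθne : Dθ t' ≠ 0 := by
    rw [hDθdef]
    exact mul_ne_zero (by rw [← hx'def]; exact hF'ne) (inv_ne_zero (by rw [← hx'def]; exact hh'ne))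
  have haDθ : a * Dθ t' = c' := by
    simp only [hDθdef, hadef, ← hx'def]
    field_simp
  set ε₂ := ε / (2 * (|a| + 1)) with hε₂def
  have hε₂ : 0 < ε₂ := by positivity
  have hsl : Tendsto (slope Dθ t') (𝓝[≠] t') (𝓝 0) := hasDerivAt_iff_tendsto_slope.1 hDθd
  have hev0 : ∀ᶠ τ in 𝓝[≠] t', |slope Dθ t' τ| < ε₂ := by
    have h5 := hsl (Metric.ball_mem_nhds 0 hε₂)
    simp only [mem_map] at h5
    filter_upwards [h5] with τ hτ
    simpa [Real.dist_eq] using hτ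
  have hev : ∀ᶠ τ in 𝓝 t', |Dθ τ - Dθ t'| ≤ ε₂ * |τ - t'| := by
    rw [eventually_nhdsWithin_iff] at hev0
    filter_upwards [hev0] with τ hτ
    rcases eq_or_ne τ t' with rfl | hne
    · simp
    · have h5 := hτ hne
      rw [slope_def_field] at h5
      have hne2 : τ - t' ≠ 0 := sub_ne_zero.2 hne
      calc |Dθ τ - Dθ t'| = |(Dθ τ - Dθ t')/(τ - t')| * |τ - t'| := by
            rw [← abs_mul]; congr 1; field_simp
        _ ≤ ε₂ * |τ - t'| := mul_le_mul_of_nonneg_right h5.le (abs_nonneg _)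
  obtain ⟨δ, hδpos, hδ⟩ := Metric.eventually_nhds_iff.1 (hev.and (Ioo_mem_nhds ht'.1 ht'.2))
  set t := t' + min (δ/2) ((v - t')/2) with htdef
  have hvpos : 0 < (v - t')/2 := by have := ht'.2; linarith
  have hmin : 0 < min (δ/2) ((v - t')/2) := lt_min (by linarith) hvpos
  have htt' : t' < t := by rw [htdef]; linarith
  have htv : t < v := by
    rw [htdef]
    have := min_le_right (δ/2) ((v - t')/2)
    linarith
  have htIoo : t ∈ Ioo u v := ⟨ht'.1.trans htt', htv⟩
  have htd : dist t t' < δ := by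
    rw [Real.dist_eq, htdef]
    have h6 := min_le_left (δ/2) ((v - t')/2)
    rw [abs_of_pos (by linarith)]
    linarith
  have hcont : ContinuousOn θ (Icc t' t) := by
    intro τ hτ
    have hτm : τ ∈ Ioo u v := ⟨ht'.1.trans_le hτ.1, lt_of_le_of_lt hτ.2 htv⟩
    exact (hθd τ hτm).continuousAt.continuousWithinAt
  have hdOn : ∀ τ ∈ Ioo t' t, HasDerivAt θ (Dθ τ) τ := fun τ hτ =>
    hθd τ ⟨ht'.1.trans hτ.1, hτ.2.trans htv⟩
  obtain ⟨ξ, hξ, hξeq⟩ := exists_hasDerivAt_eq_slope θ Dθ htt' hcont hdOn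
  have hξd : dist ξ t' < δ := by
    rw [Real.dist_eq, abs_of_pos (by linarith [hξ.1])]
    have h6 := min_le_left (δ/2) ((v - t')/2)
    have := hξ.2
    rw [htdef] at this
    linarith
  have habs : |t - t'| = t - t' := abs_of_pos (by linarith)
  have hRbound : |θ t - θ t' - Dθ t' * (t - t')| ≤ ε₂ * (t - t')^2 := by
    have heq2 : θ t - θ t' = Dθ ξ * (t - t') := by
      rw [hξeq, div_mul_cancel₀ _ (sub_ne_zero.2 htt'.ne')]
    rw [heq2]
    have h7 : Dθ ξ * (t - t') - Dθ t' * (t - t') = (Dθ ξ - Dθ t') * (t - t') := by ring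
    rw [h7, abs_mul]
    have h6 := (hδ hξd).1
    have h8 : |ξ - t'| ≤ |t - t'| := by
      rw [habs, abs_of_pos (by linarith [hξ.1])]
      linarith [hξ.2]
    calc |Dθ ξ - Dθ t'| * |t - t'| ≤ (ε₂ * |ξ - t'|) * |t - t'| :=
          mul_le_mul_of_nonneg_right h6 (abs_nonneg _)
      _ ≤ (ε₂ * |t - t'|) * |t - t'| := by
          have := mul_le_mul_of_nonneg_left h8 hε₂.le
          exact mul_le_mul_of_nonneg_right this (abs_nonneg _)
      _ = ε₂ * (t - t')^2 := by rw [habs]; ring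
  -- final contradiction
  have hmax1 := hmaxpt t (Ioo_subset_Icc_self htIoo)
  have hA := claimA t (Ioo_subset_Icc_self htIoo)
  have hθeq : θ t - θ t' = F (hinv t) - F x' := by rw [hθdef, hx'def]
  have key1 : a * (θ t - θ t') ≤ c' * (t - t') - ε * (t - t')^2 := by
    rw [hθeq]
    exact le_trans hA hmax1
  have key2 : a * (θ t - θ t') = c' * (t - t') + a * (θ t - θ t' - Dθ t' * (t - t')) := by
    rw [← haDθ]; ring
  have key3 : ε * (t - t')^2 ≤ -(a * (θ t - θ t' - Dθ t' * (t - t'))) := by linarith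
  have key4 : -(a * (θ t - θ t' - Dθ t' * (t - t'))) ≤ |a| * (ε₂ * (t - t')^2) := by
    calc -(a * (θ t - θ t' - Dθ t' * (t - t'))) ≤ |a * (θ t - θ t' - Dθ t' * (t - t'))| :=
          neg_le_abs _
      _ = |a| * |θ t - θ t' - Dθ t' * (t - t')| := abs_mul _ _
      _ ≤ |a| * (ε₂ * (t - t')^2) := mul_le_mul_of_nonneg_left hRbound (abs_nonneg a)
  have hε₂eq : ε₂ * (2 * (|a| + 1)) = ε := by
    rw [hε₂def]
    field_simp
  have hΔpos : 0 < (t - t')^2 := by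
    have h9 : 0 < t - t' := by linarith
    positivity
  nlinarith [key3, key4, hε₂eq, hΔpos, hε₂, abs_nonneg a, mul_pos hε₂ hΔpos]

set_option maxHeartbeats 2000000 in
lemma chord_ineq {I : Set ℝ} (hI : I.OrdConnected)
    (f g h s : ℝ → ℝ)
    (hfd : ∀ x ∈ I, DifferentiableAt ℝ f x) (hfd2 : ∀ x ∈ I, DifferentiableAt ℝ (deriv f) x)
    (hf0 : ∀ x ∈ I, deriv f x ≠ 0) (hf : StrictMonoOn f I)
    (hgd : ∀ x ∈ I, DifferentiableAt ℝ g x) (hgd2 : ∀ x ∈ I, DifferentiableAt ℝ (deriv g) x)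
    (hg0 : ∀ x ∈ I, deriv g x ≠ 0) (hg : StrictMonoOn g I)
    (hhd : ∀ x ∈ I, DifferentiableAt ℝ h x) (hhd2 : ∀ x ∈ I, DifferentiableAt ℝ (deriv h) x)
    (hh0 : ∀ x ∈ I, deriv h x ≠ 0) (hh : StrictMonoOn h I)
    (hmax : ∀ x ∈ I,
      deriv (deriv h) x / deriv h x =
        max (deriv (deriv f) x / deriv f x) (deriv (deriv g) x / deriv g x))
    (hsc : ContinuousOn s I) (hs : StrictMonoOn s I)
    (conv3f : ∀ x₁ ∈ I, ∀ x₂ ∈ I, ∀ x₃ ∈ I, x₁ < x₂ → x₂ < x₃ →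
      (f x₃ - f x₁) * s x₂ ≤ (f x₃ - f x₂) * s x₁ + (f x₂ - f x₁) * s x₃)
    (conv3g : ∀ x₁ ∈ I, ∀ x₂ ∈ I, ∀ x₃ ∈ I, x₁ < x₂ → x₂ < x₃ →
      (g x₃ - g x₁) * s x₂ ≤ (g x₃ - g x₂) * s x₁ + (g x₂ - g x₁) * s x₃)
    {u v : ℝ} (hu : u ∈ h '' I) (hv : v ∈ h '' I) (huv : u < v) :
    ∀ w, u < w → w < v →
      (v - u) * s (invFunOn h I w) ≤
        (v - w) * s (invFunOn h I u) + (w - u) * s (invFunOn h I v) := by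
  intro w huw hwv
  by_contra hviol
  push_neg at hviol
  classical
  set T := h '' I with hT
  set hinv := invFunOn h I with hinvdef
  have hhc : ContinuousOn h I := fun x hx => (hhd x hx).continuousAt.continuousWithinAt
  have hToc : T.OrdConnected := by
    rw [← isPreconnected_iff_ordConnected]
    exact (isPreconnected_iff_ordConnected.2 hI).image h hhc
  have hmemI : ∀ t ∈ T, hinv t ∈ I := by
    intro t ht; obtain ⟨x, hx, rfl⟩ := ht; exact invFunOn_mem ⟨x, hx, rfl⟩
  have hright : ∀ t ∈ T, h (hinv t) = t := by
    intro t ht; obtain ⟨x, hx, rfl⟩ := ht; exact invFunOn_eq ⟨x, hx, rfl⟩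
  have hleft : ∀ x ∈ I, hinv (h x) = x := fun x hx => (hh.injOn).leftInvOn_invFunOn hx
  have hinvmono : StrictMonoOn hinv T := by
    intro t1 h1 t2 h2 h12
    by_contra hcon
    push_neg at hcon
    have := hh.monotoneOn (hmemI t2 h2) (hmemI t1 h1) hcon
    rw [hright t1 h1, hright t2 h2] at this
    exact absurd this (not_le.2 h12)
  have hIccT : Icc u v ⊆ T := hToc.out hu hv
  set xu := hinv u with hxu
  set xv := hinv v with hxv
  have hxuI : xu ∈ I := hmemI u hu
  have hxvI : xv ∈ I := hmemI v hv
  have hxuv : xu < xv := hinvmono hu hv huv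
  have hIccI : Icc xu xv ⊆ I := hI.out hxuI hxvI
  -- membership conversions
  have hmem2 : ∀ x ∈ Icc xu xv, h x ∈ Icc u v := by
    intro x hx
    have hxI : x ∈ I := hIccI hx
    constructor
    · calc u = h xu := (hright u hu).symm
        _ ≤ h x := hh.monotoneOn hxuI hxI hx.1
    · calc h x ≤ h xv := hh.monotoneOn hxI hxvI hx.2
        _ = v := hright v hv
  have hmem3 : ∀ t ∈ Icc u v, hinv t ∈ Icc xu xv :=
    fun t ht => ⟨hinvmono.monotoneOn hu (hIccT ht) ht.1, hinvmono.monotoneOn (hIccT ht) hv ht.2⟩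
  -- continuity of hinv on Icc u v
  have hcontIcc : ContinuousOn hinv (Icc u v) := by
    intro t ht
    have htT : t ∈ T := hIccT ht
    have hR : t < v → ContinuousWithinAt hinv (Ici t) t := by
      intro htv
      have hIccmem : Icc t v ∈ 𝓝[≥] t := Icc_mem_nhdsGE_of_mem ⟨le_refl t, htv⟩
      refine StrictMonoOn.continuousWithinAt_right_of_exists_between
        (hinvmono.mono (hToc.out htT hv)) hIccmem ?_
      intro b hb
      set d := min b xv with hd
      have hxd : hinv t < d := lt_min hb (hinvmono htT hv htv)
      have hdI : d ∈ I := hI.out (hmemI t htT) hxvI ⟨hxd.le, min_le_right b xv⟩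
      refine ⟨h d, ⟨?_, ?_⟩, ?_⟩
      · have := hh (hmemI t htT) hdI hxd
        rw [hright t htT] at this
        exact this.le
      · have := hh.monotoneOn hdI hxvI (min_le_right b xv)
        rw [hright v hv] at this
        exact this
      · rw [hleft d hdI]
        exact ⟨hxd, min_le_left b xv⟩
    have hL : u < t → ContinuousWithinAt hinv (Iic t) t := by
      intro hut
      have hIccmem : Icc u t ∈ 𝓝[≤] t := Icc_mem_nhdsLE_of_mem ⟨hut, le_refl t⟩
      refine StrictMonoOn.continuousWithinAt_left_of_exists_between
        (hinvmono.mono (hToc.out hu htT)) hIccmem ?_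
      intro b hb
      set d := max b xu with hd
      have hxd : d < hinv t := max_lt hb (hinvmono hu htT hut)
      have hdI : d ∈ I := hI.out hxuI (hmemI t htT) ⟨le_max_right b xu, hxd.le⟩
      refine ⟨h d, ⟨?_, ?_⟩, ?_⟩
      · have := hh.monotoneOn hxuI hdI (le_max_right b xu)
        rw [hright u hu] at this
        exact this
      · have := hh hdI (hmemI t htT) hxd
        rw [hright t htT] at this
        exact this.le
      · rw [hleft d hdI]
        exact ⟨le_max_left b xu, hxd⟩
    rcases eq_or_lt_of_le ht.2 with hv2 | hv2
    · subst hv2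
      have hut : u < t := huv
      exact (hL hut).mono Icc_subset_Iic_self
    · rcases eq_or_lt_of_le ht.1 with hu2 | hu2
      · exact (hR hv2).mono (hu2 ▸ Icc_subset_Ici_self)
      · exact ((hL hu2).union (hR hv2)).mono (fun y hy => le_total y t)
  have hderiv : ∀ t ∈ Ioo u v, HasDerivAt hinv (deriv h (hinv t))⁻¹ t := by
    intro t ht
    have htT : t ∈ T := hIccT (Ioo_subset_Icc_self ht)
    have hxI : hinv t ∈ I := hmemI t htT
    have hcontAt : ContinuousAt hinv t :=
      (hcontIcc t (Ioo_subset_Icc_self ht)).continuousAt (Icc_mem_nhds ht.1 ht.2)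
    have hfg : ∀ᶠ y in 𝓝 t, h (hinv y) = y := by
      filter_upwards [Ioo_mem_nhds ht.1 ht.2] with y hy
      exact hright y (hIccT (Ioo_subset_Icc_self hy))
    exact HasDerivAt.of_local_left_inverse hcontAt ((hhd _ hxI).hasDerivAt) (hh0 _ hxI) hfg
  set cc := (s xv - s xu) / (v - u) with hccdef
  have hvu : (0:ℝ) < v - u := by linarith
  have hccv : cc * (v - u) = s xv - s xu := div_mul_cancel₀ _ (ne_of_gt hvu)
  set l : ℝ → ℝ := fun t => s xu + cc * (t - u) with hldef
  set M₀ := s (hinv w) - l w with hM₀def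
  have hM₀ : 0 < M₀ := by
    rw [hM₀def, hldef]
    simp only
    nlinarith [hviol, hccv]
  set ε := M₀ / (2 * (v - u)^2) with hεdef
  have hε : 0 < ε := by positivity
  have hεe : ε * (v - u)^2 = M₀ / 2 := by
    rw [hεdef]
    field_simp
  set ψ : ℝ → ℝ := fun t => s (hinv t) - l t + ε * (t - w)^2 with hψdef
  have hφcont : ContinuousOn (fun t => s (hinv t)) (Icc u v) :=
    hsc.comp hcontIcc (fun t ht => hmemI t (hIccT ht))
  have hψcont : ContinuousOn ψ (Icc u v) := by
    apply ContinuousOn.add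
    · apply hφcont.sub
      exact Continuous.continuousOn (by continuity)
    · exact Continuous.continuousOn (by continuity)
  obtain ⟨t', ht'mem, ht'max⟩ :=
    isCompact_Icc.exists_isMaxOn (nonempty_Icc.2 huv.le) hψcont
  have hwIcc : w ∈ Icc u v := ⟨huw.le, hwv.le⟩
  have hψw : ψ w = M₀ := by
    rw [hψdef, hM₀def]
    simp
  have hψu : ψ u = ε * (u - w)^2 := by
    rw [hψdef, hldef]
    simp [hxu]
  have hψv : ψ v = ε * (v - w)^2 := by
    rw [hψdef, hldef]
    simp only
    nlinarith [hccv]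
  have hM₀le : M₀ ≤ ψ t' := hψw ▸ ht'max hwIcc
  have ht'Ioo : t' ∈ Ioo u v := by
    rcases eq_or_lt_of_le ht'mem.1 with he | hl
    · exfalso
      have hψt' : ψ t' = ε * (u - w)^2 := by rw [← he]; exact hψu
      have h1 : ε * (u - w)^2 ≤ ε * (v - u)^2 := by
        apply mul_le_mul_of_nonneg_left _ hε.le
        have h2 : |u - w| ≤ |v - u| := by
          rw [abs_of_neg (by linarith), abs_of_pos hvu]
          linarith
        calc (u - w)^2 = |u - w|^2 := (sq_abs _).symm
          _ ≤ |v - u|^2 := by nlinarith [abs_nonneg (u - w)]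
          _ = (v - u)^2 := sq_abs _
      rw [hεe] at h1
      rw [hψt'] at hM₀le
      linarith
    · rcases eq_or_lt_of_le ht'mem.2 with he | hr
      · exfalso
        have hψt' : ψ t' = ε * (v - w)^2 := by rw [he]; exact hψv
        have h1 : ε * (v - w)^2 ≤ ε * (v - u)^2 := by
          apply mul_le_mul_of_nonneg_left _ hε.le
          have h2 : |v - w| ≤ |v - u| := by
            rw [abs_of_pos (by linarith), abs_of_pos hvu]
            linarith
          calc (v - w)^2 = |v - w|^2 := (sq_abs _).symm
            _ ≤ |v - u|^2 := by nlinarith [abs_nonneg (v - w)]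
            _ = (v - u)^2 := sq_abs _
        rw [hεe] at h1
        rw [hψt'] at hM₀le
        linarith
      · exact ⟨hl, hr⟩
  set c' := cc - 2*ε*(t' - w) with hc'def
  have hmaxpt : ∀ t ∈ Icc u v,
      s (hinv t) - s (hinv t') ≤ c' * (t - t') - ε * (t - t')^2 := by
    intro t ht
    have h1 : ψ t ≤ ψ t' := ht'max ht
    rw [hψdef, hldef] at h1
    simp only at h1
    have hid : (t - w)^2 - (t' - w)^2 = (t - t')^2 + 2*(t' - w)*(t - t') := by ring
    rw [hc'def]
    nlinarith [h1, hid]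
  have hx'I : hinv t' ∈ I := hmemI t' (hIccT ht'mem)
  have hbranch := hmax (hinv t') hx'I
  rcases max_choice (deriv (deriv f) (hinv t') / deriv f (hinv t'))
      (deriv (deriv g) (hinv t') / deriv g (hinv t')) with hch | hch
  · rw [hch] at hbranch
    have heqf : deriv (deriv f) (invFunOn h I t') * deriv h (invFunOn h I t')
        = deriv f (invFunOn h I t') * deriv (deriv h) (invFunOn h I t') := by
      have := (div_eq_div_iff (hh0 _ hx'I) (hf0 _ hx'I)).1 hbranch
      linarith [this]
    exact no_max hI f h s hfd hfd2 hf0 hf hhd hhd2 hh0 hh hs conv3f hu hv huv ht'Ioo hε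
      heqf hmaxpt
  · rw [hch] at hbranch
    have heqg : deriv (deriv g) (invFunOn h I t') * deriv h (invFunOn h I t')
        = deriv g (invFunOn h I t') * deriv (deriv h) (invFunOn h I t') := by
      have := (div_eq_div_iff (hh0 _ hx'I) (hg0 _ hx'I)).1 hbranch
      linarith [this]
    exact no_max hI g h s hgd hgd2 hg0 hg hhd hhd2 hh0 hh hs conv3g hu hv huv ht'Ioo hε
      heqg hmaxpt

set_option maxHeartbeats 1000000 in
lemma core {I : Set ℝ} (hI : I.OrdConnected)
    (f g h : ℝ → ℝ)
    (hfd : ∀ x ∈ I, DifferentiableAt ℝ f x) (hfd2 : ∀ x ∈ I, DifferentiableAt ℝ (deriv f) x)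
    (hf0 : ∀ x ∈ I, deriv f x ≠ 0) (hf : StrictMonoOn f I)
    (hgd : ∀ x ∈ I, DifferentiableAt ℝ g x) (hgd2 : ∀ x ∈ I, DifferentiableAt ℝ (deriv g) x)
    (hg0 : ∀ x ∈ I, deriv g x ≠ 0) (hg : StrictMonoOn g I)
    (hhd : ∀ x ∈ I, DifferentiableAt ℝ h x) (hhd2 : ∀ x ∈ I, DifferentiableAt ℝ (deriv h) x)
    (hh0 : ∀ x ∈ I, deriv h x ≠ 0) (hh : StrictMonoOn h I)
    (hmax : ∀ x ∈ I,
      deriv (deriv h) x / deriv h x =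
        max (deriv (deriv f) x / deriv f x) (deriv (deriv g) x / deriv g x))
    (s : ℝ → ℝ) (hsc : ContinuousOn s I) (hs : StrictMonoOn s I)
    (Hf : QALE I f s) (Hg : QALE I g s) : QALE I h s := by
  classical
  have hfc : ContinuousOn f I := fun x hx => (hfd x hx).continuousAt.continuousWithinAt
  have hgc : ContinuousOn g I := fun x hx => (hgd x hx).continuousAt.continuousWithinAt
  have hhc : ContinuousOn h I := fun x hx => (hhd x hx).continuousAt.continuousWithinAt
  have conv3f := conv3_of_qale hI hfc hf hsc hs Hf
  have conv3g := conv3_of_qale hI hgc hg hsc hs Hg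
  set T := h '' I with hT
  set hinv := invFunOn h I with hinvdef
  have hToc : T.OrdConnected := by
    rw [← isPreconnected_iff_ordConnected]
    exact (isPreconnected_iff_ordConnected.2 hI).image h hhc
  have hTconv : Convex ℝ T := convex_iff_ordConnected.2 hToc
  have hmemI : ∀ t ∈ T, hinv t ∈ I := by
    intro t ht; obtain ⟨x, hx, rfl⟩ := ht; exact invFunOn_mem ⟨x, hx, rfl⟩
  have hleft : ∀ x ∈ I, hinv (h x) = x := fun x hx => (hh.injOn).leftInvOn_invFunOn hx
  have chord : ∀ {u v : ℝ}, u ∈ T → v ∈ T → u < v → ∀ w, u < w → w < v →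
      (v - u) * s (hinv w) ≤ (v - w) * s (hinv u) + (w - u) * s (hinv v) :=
    fun hu hv huv => chord_ineq hI f g h s hfd hfd2 hf0 hf hgd hgd2 hg0 hg hhd hhd2 hh0 hh
      hmax hsc hs conv3f conv3g hu hv huv
  have hconv : ConvexOn ℝ T (fun t => s (hinv t)) := by
    refine ⟨hTconv, ?_⟩
    have key : ∀ p q a b : ℝ, p ∈ T → q ∈ T → p < q → 0 < a → 0 < b → a + b = 1 →
        s (hinv (a*p + b*q)) ≤ a * s (hinv p) + b * s (hinv q) := by
      intro p q a b hp hq hpq ha hb hab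
      have e0 : a*p + b*q - p = b*(q-p) := by linear_combination p * hab
      have e0' : q - (a*p + b*q) = a*(q-p) := by linear_combination (-q) * hab
      have hw1 : p < a*p + b*q := by nlinarith [mul_pos hb (sub_pos.2 hpq), e0]
      have hw2 : a*p + b*q < q := by nlinarith [mul_pos ha (sub_pos.2 hpq), e0']
      have hc := chord hp hq hpq (a*p + b*q) hw1 hw2
      have e1 : q - (a*p + b*q) = a*(q - p) := by linear_combination (-q) * hab
      have e2 : (a*p + b*q) - p = b*(q - p) := by linear_combination p * hab
      rw [e1, e2] at hc
      have hqp : (0:ℝ) < q - p := by linarith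
      have e3 : a * (q-p) * s (hinv p) + b * (q-p) * s (hinv q)
          = (a * s (hinv p) + b * s (hinv q)) * (q - p) := by ring
      rw [← mul_le_mul_iff_of_pos_right hqp]
      calc s (hinv (a*p+b*q)) * (q-p) = (q - p) * s (hinv (a*p+b*q)) := by ring
        _ ≤ a*(q-p) * s (hinv p) + b*(q-p) * s (hinv q) := hc
        _ = (a * s (hinv p) + b * s (hinv q)) * (q - p) := e3
    intro p hp q hq a b ha hb hab
    simp only [smul_eq_mul]
    rcases lt_trichotomy p q with hpq | hpq | hpq
    · rcases eq_or_lt_of_le ha with ha0 | ha0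
      · have hb1 : b = 1 := by linarith
        rw [← ha0, hb1]; simp
      · rcases eq_or_lt_of_le hb with hb0 | hb0
        · have ha1 : a = 1 := by linarith
          rw [← hb0, ha1]; simp
        · exact key p q a b hp hq hpq ha0 hb0 hab
    · subst hpq
      have : a * p + b * p = p := by linear_combination p * hab
      rw [this]
      have : a * s (hinv p) + b * s (hinv p) = s (hinv p) := by
        linear_combination s (hinv p) * hab
      rw [this]
    · rcases eq_or_lt_of_le ha with ha0 | ha0
      · have hb1 : b = 1 := by linarith
        rw [← ha0, hb1]; simp
      · rcases eq_or_lt_of_le hb with hb0 | hb0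
        · have ha1 : a = 1 := by linarith
          rw [← hb0, ha1]; simp
        · have := key q p b a hq hp hpq hb0 ha0 (by linarith)
          calc s (hinv (a*p + b*q)) = s (hinv (b*q + a*p)) := by ring_nf
            _ ≤ b * s (hinv q) + a * s (hinv p) := this
            _ = a * s (hinv p) + b * s (hinv q) := by ring
  -- conclude QALE
  intro n hn v hv a b ha hb
  have hnR : (0:ℝ) < n := by exact_mod_cast hn
  have hw1 : ∀ i ∈ (Finset.univ : Finset (Fin n)), (0:ℝ) ≤ 1/(n:ℝ) := by
    intro i _; positivity
  have hw2 : ∑ _i : Fin n, (1:ℝ)/(n:ℝ) = 1 := by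
    rw [Finset.sum_const]
    simp
    field_simp
  have hmem : ∀ i ∈ (Finset.univ : Finset (Fin n)), h (v i) ∈ T :=
    fun i _ => ⟨v i, hv i, rfl⟩
  have hjen := hconv.map_sum_le hw1 hw2 hmem
  have e4 : ∑ i : Fin n, ((1:ℝ)/(n:ℝ)) • h (v i) = h a := by
    rw [ha.2]
    simp only [smul_eq_mul]
    rw [Finset.sum_div]
    exact Finset.sum_congr rfl fun i _ => one_div_mul_eq_div _ _
  rw [e4] at hjen
  have e5 : s (hinv (h a)) = s a := by rw [hleft a ha.1]
  rw [e5] at hjen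
  have e6 : ∑ i : Fin n, ((1:ℝ)/(n:ℝ)) • s (hinv (h (v i))) = s b := by
    rw [hb.2]
    simp only [smul_eq_mul]
    rw [Finset.sum_div]
    refine Finset.sum_congr rfl fun i _ => ?_
    rw [hleft (v i) (hv i), one_div_mul_eq_div]
  rw [e6] at hjen
  by_contra hcon
  push_neg at hcon
  exact absurd hjen (not_le.2 (hs hb.1 ha.1 hcon))

lemma fix_gen {I : Set ℝ} {F : ℝ → ℝ}
    (h1 : ∀ x ∈ I, DifferentiableAt ℝ F x) (h2 : ∀ x ∈ I, DifferentiableAt ℝ (deriv F) x)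
    (h3 : ∀ x ∈ I, deriv F x ≠ 0) (h4 : StrictMonoOn F I ∨ StrictAntiOn F I) :
    ∃ G : ℝ → ℝ, (∀ x ∈ I, DifferentiableAt ℝ G x) ∧ (∀ x ∈ I, DifferentiableAt ℝ (deriv G) x)
      ∧ (∀ x ∈ I, deriv G x ≠ 0) ∧ StrictMonoOn G I
      ∧ (∀ x : ℝ, deriv (deriv G) x / deriv G x = deriv (deriv F) x / deriv F x)
      ∧ (∀ u : ℝ → ℝ, QALE I G u ↔ QALE I F u)
      ∧ (∀ u : ℝ → ℝ, QALE I u G ↔ QALE I u F) := by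
  rcases h4 with h4 | h4
  · exact ⟨F, h1, h2, h3, h4, fun x => rfl, fun u => Iff.rfl, fun u => Iff.rfl⟩
  · have hD : deriv (fun y => -F y) = fun x => -deriv F x := funext fun x => deriv.neg
    refine ⟨fun y => -F y, fun x hx => (h1 x hx).neg, ?_, ?_, ?_, ?_, ?_, ?_⟩
    · rw [hD]
      exact fun x hx => (h2 x hx).neg
    · intro x hx
      rw [deriv.fun_neg]
      exact neg_ne_zero.2 (h3 x hx)
    · intro x hx y hy hxy
      exact neg_lt_neg (h4 hx hy hxy)
    · intro x
      rw [hD]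
      simp only [deriv.fun_neg]
      exact neg_div_neg_eq _ _
    · exact fun u => qale_neg_left
    · exact fun u => qale_neg_right

lemma fix_s {I : Set ℝ} {s : ℝ → ℝ} (hsc : ContinuousOn s I)
    (hsm : StrictMonoOn s I ∨ StrictAntiOn s I) :
    ∃ S : ℝ → ℝ, ContinuousOn S I ∧ StrictMonoOn S I ∧
      (∀ u : ℝ → ℝ, QALE I u S ↔ QALE I u s) := by
  rcases hsm with hsm | hsm
  · exact ⟨s, hsc, hsm, fun u => Iff.rfl⟩
  · exact ⟨fun y => -s y, hsc.neg, fun x hx y hy hxy => neg_lt_neg (hsm hx hy hxy),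
      fun u => qale_neg_right⟩

/-- with `h` as in Statement 13 (`h''/h' = max (f''/f') (g''/g')`),
`h` generates the least upper bound: any continuous strictly monotone `s` with
`A^[f] ≤ A^[s]` and `A^[g] ≤ A^[s]` satisfies `A^[h] ≤ A^[s]`. -/
theorem qale_sup_least
    (I : Set ℝ) (hI : I.OrdConnected)
    (f g h : ℝ → ℝ)
    (hfd : ∀ x ∈ I, DifferentiableAt ℝ f x) (hfd2 : ∀ x ∈ I, DifferentiableAt ℝ (deriv f) x)
    (hfc2 : ContinuousOn (deriv (deriv f)) I)
    (hf0 : ∀ x ∈ I, deriv f x ≠ 0)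
    (hf : StrictMonoOn f I ∨ StrictAntiOn f I)
    (hgd : ∀ x ∈ I, DifferentiableAt ℝ g x) (hgd2 : ∀ x ∈ I, DifferentiableAt ℝ (deriv g) x)
    (hgc2 : ContinuousOn (deriv (deriv g)) I)
    (hg0 : ∀ x ∈ I, deriv g x ≠ 0)
    (hg : StrictMonoOn g I ∨ StrictAntiOn g I)
    (hhd : ∀ x ∈ I, DifferentiableAt ℝ h x) (hhd2 : ∀ x ∈ I, DifferentiableAt ℝ (deriv h) x)
    (hhc2 : ContinuousOn (deriv (deriv h)) I)
    (hh0 : ∀ x ∈ I, deriv h x ≠ 0)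
    (hmax : ∀ x ∈ I,
      deriv (deriv h) x / deriv h x =
        max (deriv (deriv f) x / deriv f x) (deriv (deriv g) x / deriv g x)) :
    ∀ s : ℝ → ℝ, ContinuousOn s I → (StrictMonoOn s I ∨ StrictAntiOn s I) →
      QALE I f s → QALE I g s → QALE I h s := by
  intro s hsc hsmono Hf Hg
  obtain ⟨F, hFd, hFd2, hF0, hFm, hFr, hFql, -⟩ := fix_gen hfd hfd2 hf0 hf
  obtain ⟨G, hGd, hGd2, hG0, hGm, hGr, hGql, -⟩ := fix_gen hgd hgd2 hg0 hg
  have hhc : ContinuousOn h I := fun x hx => (hhd x hx).continuousAt.continuousWithinAt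
  have hh'c : ContinuousOn (deriv h) I :=
    fun x hx => (hhd2 x hx).continuousAt.continuousWithinAt
  have hsign : (∀ x ∈ I, 0 < deriv h x) ∨ (∀ x ∈ I, deriv h x < 0) := by
    by_contra hcon
    push_neg at hcon
    obtain ⟨⟨x, hx, hx'⟩, ⟨y, hy, hy'⟩⟩ := hcon
    have hxneg : deriv h x < 0 := lt_of_le_of_ne hx' (hh0 x hx)
    have hypos : 0 < deriv h y := lt_of_le_of_ne hy' (Ne.symm (hh0 y hy))
    have hsub : uIcc x y ⊆ I := hI.uIcc_subset hx hy
    have hmem0 : (0:ℝ) ∈ uIcc (deriv h x) (deriv h y) := by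
      rw [mem_uIcc]
      left
      exact ⟨hxneg.le, hypos.le⟩
    obtain ⟨z, hz, hz0⟩ := intermediate_value_uIcc (hh'c.mono hsub) hmem0
    exact hh0 z (hsub hz) hz0
  have hIconv : Convex ℝ I := convex_iff_ordConnected.2 hI
  have hh : StrictMonoOn h I ∨ StrictAntiOn h I := by
    rcases hsign with hp | hn
    · exact Or.inl (strictMonoOn_of_deriv_pos hIconv hhc
        (fun x hx => hp x (interior_subset hx)))
    · exact Or.inr (strictAntiOn_of_deriv_neg hIconv hhc
        (fun x hx => hn x (interior_subset hx)))
  obtain ⟨H, hHd, hHd2, hH0, hHm, hHr, hHql, -⟩ := fix_gen hhd hhd2 hh0 hh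
  obtain ⟨S, hSc, hSm, hSql⟩ := fix_s hsc hsmono
  have hmax' : ∀ x ∈ I, deriv (deriv H) x / deriv H x =
      max (deriv (deriv F) x / deriv F x) (deriv (deriv G) x / deriv G x) := by
    intro x hx
    rw [hHr x, hFr x, hGr x]
    exact hmax x hx
  have HF : QALE I F S := (hFql S).mpr ((hSql f).mpr Hf)
  have HG : QALE I G S := (hGql S).mpr ((hSql g).mpr Hg)
  have hout := core hI F G H hFd hFd2 hF0 hFm hGd hGd2 hG0 hGm hHd hHd2 hH0 hHm hmax'
    S hSc hSm HF HG
  exact (hHql s).mp ((hSql H).mp hout)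
end
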